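/- Let (h,e,f) be an sl₂-triple in a ℤ-graded semisimple complex Lie algebra 𝔤 = ⊕_{j=1-m}^{m-1} 𝔤_j with e ∈ 𝔤_1, f ∈ 𝔤_{-1}, h = 2ζ where ζ is the grading element. Let W ⊆ 𝔤 be the sum of the irreducible sl₂-subrepresentations of dimension 2m−1 under ad of the triple, and V := 𝔤_0 ∩ W. Then the map ad(e)^{m-1} : 𝔤_{1-m} → V is a linear isomorphism. -/
import Mathlib


/-- A subspace invariant under the adjoint action of the `sl₂`-triple `(h,e,f)`. -/
def IsSl2Invariant {L : Type*} [LieRing L] [LieAlgebra ℂ L] (h e f : L)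
    (U : Submodule ℂ L) : Prop :=
  ∀ x ∈ U, ⁅h, x⁆ ∈ U ∧ ⁅e, x⁆ ∈ U ∧ ⁅f, x⁆ ∈ U

/-- An irreducible `sl₂`-subrepresentation of dimension `n` (under `ad` of the triple). -/
def IsSl2Irreducible {L : Type*} [LieRing L] [LieAlgebra ℂ L] (h e f : L) (n : ℕ)
    (U : Submodule ℂ L) : Prop :=
  IsSl2Invariant h e f U ∧ Module.finrank ℂ U = n ∧
    ∀ U' ≤ U, IsSl2Invariant h e f U' → U' = ⊥ ∨ U' = U

/-- The sum `W` of all irreducible `sl₂`-subrepresentations of dimension `n`. -/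
def sl2IrredSum {L : Type*} [LieRing L] [LieAlgebra ℂ L] (h e f : L) (n : ℕ) :
    Submodule ℂ L :=
  ⨆ U ∈ {U : Submodule ℂ L | IsSl2Irreducible h e f n U}, U

open LieAlgebra DirectSum
set_option synthInstance.maxHeartbeats 400000
set_option maxHeartbeats 1000000

section Aux

variable {L : Type*} [LieRing L] [LieAlgebra ℂ L]
variable {m : ℕ} {g : ℤ → Submodule ℂ L} {ζ h e f : L}

lemma aux_pow_succ_apply (e : L) (k : ℕ) (x : L) :
    ((ad ℂ L e) ^ (k + 1)) x = ⁅e, ((ad ℂ L e) ^ k) x⁆ := by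
  rw [pow_succ']; rfl

lemma adE_pow_mem (hbr : ∀ (j k : ℤ), ∀ x ∈ g j, ∀ y ∈ g k, ⁅x, y⁆ ∈ g (j + k))
    (he : e ∈ g 1) {j : ℤ} {x : L} (hx : x ∈ g j) (k : ℕ) :
    ((ad ℂ L e) ^ k) x ∈ g (j + k) := by
  induction k with
  | zero => simpa using hx
  | succ k ih =>
    have hidx : (j + ((k + 1 : ℕ) : ℤ)) = 1 + (j + k) := by push_cast; ring
    rw [aux_pow_succ_apply, hidx]
    exact hbr 1 (j + k) e he _ ih

lemma lie_h_of_mem (hζ : ∀ (j : ℤ), ∀ x ∈ g j, ⁅ζ, x⁆ = (j : ℂ) • x)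
    (hhζ : h = (2 : ℂ) • ζ) {j : ℤ} {x : L} (hx : x ∈ g j) :
    ⁅h, x⁆ = ((2 : ℂ) * (j : ℂ)) • x := by
  rw [hhζ, smul_lie, hζ j x hx, smul_smul]

lemma lie_f_adE_pow (hbr : ∀ (j k : ℤ), ∀ x ∈ g j, ∀ y ∈ g k, ⁅x, y⁆ ∈ g (j + k))
    (hζ : ∀ (j : ℤ), ∀ x ∈ g j, ⁅ζ, x⁆ = (j : ℂ) • x)
    (he : e ∈ g 1) (hef : ⁅e, f⁆ = h) (hhζ : h = (2 : ℂ) • ζ)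
    {j : ℤ} {x : L} (hx : x ∈ g j) (hfx : ⁅f, x⁆ = 0) (k : ℕ) :
    ⁅f, ((ad ℂ L e) ^ (k + 1)) x⁆
      = (-((k : ℂ) + 1) * (2 * (j : ℂ) + (k : ℂ))) • ((ad ℂ L e) ^ k) x := by
  induction k with
  | zero =>
    simp only [zero_add, pow_one, pow_zero, Module.End.one_apply, ad_apply]
    rw [leibniz_lie f e x, hfx, lie_zero, add_zero, ← lie_skew f e, hef, neg_lie,
      lie_h_of_mem hζ hhζ hx, ← neg_smul]
    ring_nf
  | succ k ih =>
    rw [aux_pow_succ_apply e (k + 1), leibniz_lie f e (((ad ℂ L e) ^ (k + 1)) x),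
      ← lie_skew f e, hef, neg_lie, ih, lie_smul,
      lie_h_of_mem hζ hhζ (adE_pow_mem hbr he hx (k + 1)),
      ← aux_pow_succ_apply, ← neg_smul, ← add_smul]
    congr 1
    push_cast
    ring


lemma adE_pow_descent (hbr : ∀ (j k : ℤ), ∀ x ∈ g j, ∀ y ∈ g k, ⁅x, y⁆ ∈ g (j + k))
    (hζ : ∀ (j : ℤ), ∀ x ∈ g j, ⁅ζ, x⁆ = (j : ℂ) • x)
    (he : e ∈ g 1) (hef : ⁅e, f⁆ = h) (hhζ : h = (2 : ℂ) • ζ)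
    {x : L} (hx : x ∈ g (1 - (m : ℤ))) (hfx : ⁅f, x⁆ = 0) :
    ∀ k : ℕ, k ≤ 2 * m - 2 → ((ad ℂ L e) ^ k) x = 0 → x = 0 := by
  intro k
  induction k with
  | zero => intro _ h0; simpa using h0
  | succ k ih =>
    intro hk h0
    have hform := lie_f_adE_pow hbr hζ he hef hhζ hx hfx k
    rw [h0, lie_zero] at hform
    have hc : (-((k : ℂ) + 1) * (2 * ((1 - (m : ℤ) : ℤ) : ℂ) + (k : ℂ))) ≠ 0 := by
      have h1 : ((k : ℂ) + 1) ≠ 0 := by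
        have : ((k + 1 : ℕ) : ℂ) ≠ 0 := Nat.cast_ne_zero.mpr (Nat.succ_ne_zero k)
        exact_mod_cast this
      have h2 : (2 * ((1 - (m : ℤ) : ℤ) : ℂ) + (k : ℂ)) ≠ 0 := by
        have : (2 * ((1 - (m : ℤ) : ℤ) : ℂ) + (k : ℂ)) = ((2 - 2 * m + k : ℤ) : ℂ) := by
          push_cast; ring
        rw [this, Ne, Int.cast_eq_zero]
        omega
      exact mul_ne_zero (neg_ne_zero.mpr h1) h2
    have : ((ad ℂ L e) ^ k) x = 0 := by
      have := hform.symm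
      rwa [smul_eq_zero_iff_right hc] at this
    exact ih (by omega) this

lemma isSl2Invariant_span {S : Set L}
    (hS : ∀ s ∈ S, ⁅h, s⁆ ∈ Submodule.span ℂ S ∧ ⁅e, s⁆ ∈ Submodule.span ℂ S ∧
      ⁅f, s⁆ ∈ Submodule.span ℂ S) :
    IsSl2Invariant h e f (Submodule.span ℂ S) := by
  have key : ∀ y : L, (∀ s ∈ S, ⁅y, s⁆ ∈ Submodule.span ℂ S) →
      ∀ x ∈ Submodule.span ℂ S, ⁅y, x⁆ ∈ Submodule.span ℂ S := by
    intro y hy x hx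
    have hle : Submodule.span ℂ S ≤ Submodule.comap (ad ℂ L y) (Submodule.span ℂ S) :=
      Submodule.span_le.mpr fun s hs => Submodule.mem_comap.mpr (hy s hs)
    exact hle hx
  intro x hx
  exact ⟨key h (fun s hs => (hS s hs).1) x hx, key e (fun s hs => (hS s hs).2.1) x hx,
    key f (fun s hs => (hS s hs).2.2) x hx⟩

lemma ux_invariant (hbr : ∀ (j k : ℤ), ∀ x ∈ g j, ∀ y ∈ g k, ⁅x, y⁆ ∈ g (j + k))
    (hζ : ∀ (j : ℤ), ∀ x ∈ g j, ⁅ζ, x⁆ = (j : ℂ) • x)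
    (he : e ∈ g 1) (hef : ⁅e, f⁆ = h) (hhζ : h = (2 : ℂ) • ζ)
    {j : ℤ} {x : L} (hx : x ∈ g j) (hfx : ⁅f, x⁆ = 0)
    {K : ℕ} (hK : ((ad ℂ L e) ^ K) x = 0) :
    IsSl2Invariant h e f
      (Submodule.span ℂ (Set.range fun k : Fin K => ((ad ℂ L e) ^ (k : ℕ)) x)) := by
  apply isSl2Invariant_span
  rintro s ⟨k, rfl⟩
  refine ⟨?_, ?_, ?_⟩
  · rw [lie_h_of_mem hζ hhζ (adE_pow_mem hbr he hx (k : ℕ))]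
    exact Submodule.smul_mem _ _ (Submodule.subset_span ⟨k, rfl⟩)
  · rw [← aux_pow_succ_apply]
    by_cases hlt : (k : ℕ) + 1 < K
    · exact Submodule.subset_span ⟨⟨(k : ℕ) + 1, hlt⟩, rfl⟩
    · have heq : (k : ℕ) + 1 = K := by have := k.2; omega
      rw [heq, hK]; exact Submodule.zero_mem _
  · show ⁅f, ((ad ℂ L e) ^ (k : ℕ)) x⁆ ∈
      Submodule.span ℂ (Set.range fun k : Fin K => ((ad ℂ L e) ^ (k : ℕ)) x)
    cases hk : (k : ℕ) with
    | zero => simpa [hfx] using Submodule.zero_mem (Submodule.span ℂ (Set.range fun k : Fin K => ((ad ℂ L e) ^ (k : ℕ)) x))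
    | succ k' =>
      rw [lie_f_adE_pow hbr hζ he hef hhζ hx hfx]
      exact Submodule.smul_mem _ _
        (Submodule.subset_span ⟨⟨k', by have := k.2; omega⟩, rfl⟩)

lemma ux_le {U : Submodule ℂ L} (hU : IsSl2Invariant h e f U) {x : L} (hxU : x ∈ U) (K : ℕ) :
    Submodule.span ℂ (Set.range fun k : Fin K => ((ad ℂ L e) ^ (k : ℕ)) x) ≤ U := by
  rw [Submodule.span_le]
  rintro _ ⟨k, rfl⟩
  have : ∀ n : ℕ, ((ad ℂ L e) ^ n) x ∈ U := by
    intro n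
    induction n with
    | zero => simpa using hxU
    | succ n ih => rw [aux_pow_succ_apply]; exact (hU _ ih).2.1
  exact this _


lemma decompose_lie_zeta [DirectSum.Decomposition g]
    (hζ : ∀ (j : ℤ), ∀ x ∈ g j, ⁅ζ, x⁆ = (j : ℂ) • x) (u : L) (j : ℤ) :
    ((DirectSum.decompose g ⁅ζ, u⁆ j : L)) = (j : ℂ) • (DirectSum.decompose g u j : L) := by
  classical
  have hrep : ⁅ζ, u⁆ = ∑ i ∈ (DirectSum.decompose g u).support,
      (i : ℂ) • (DirectSum.decompose g u i : L) := by
    conv_lhs => rw [← DirectSum.sum_support_decompose g u]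
    rw [show (⁅ζ, ∑ i ∈ (DirectSum.decompose g u).support,
        (DirectSum.decompose g u i : L)⁆ : L)
      = (ad ℂ L ζ) (∑ i ∈ (DirectSum.decompose g u).support,
        (DirectSum.decompose g u i : L)) from rfl, map_sum]
    exact Finset.sum_congr rfl fun i _ => hζ i _ (DirectSum.decompose g u i).2
  rw [hrep, DirectSum.decompose_sum]
  rw [DFinsupp.finset_sum_apply, AddSubmonoidClass.coe_finset_sum]
  rw [Finset.sum_eq_single j]
  · rw [DirectSum.decompose_smul, DFinsupp.smul_apply, SetLike.val_smul,
      DirectSum.decompose_of_mem_same g (DirectSum.decompose g u j).2]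
  · intro i _ hij
    rw [DirectSum.decompose_smul, DFinsupp.smul_apply, SetLike.val_smul,
      DirectSum.decompose_of_mem_ne g (DirectSum.decompose g u i).2 hij, smul_zero]
  · intro hj
    rw [DFinsupp.notMem_support_iff] at hj
    rw [DirectSum.decompose_smul, DFinsupp.smul_apply, SetLike.val_smul,
      DirectSum.decompose_of_mem_same g (DirectSum.decompose g u j).2, hj]
    simp

lemma component_mem_of_invariant [DirectSum.Decomposition g]
    (hζ : ∀ (j : ℤ), ∀ x ∈ g j, ⁅ζ, x⁆ = (j : ℂ) • x)
    (U : Submodule ℂ L) (hU : ∀ u ∈ U, ⁅ζ, u⁆ ∈ U) :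
    ∀ u ∈ U, ∀ j, (DirectSum.decompose g u j : L) ∈ U := by
  classical
  suffices H : ∀ n : ℕ, ∀ u ∈ U, (DirectSum.decompose g u).support.card ≤ n →
      ∀ j, (DirectSum.decompose g u j : L) ∈ U by
    intro u hu j; exact H _ u hu le_rfl j
  intro n
  induction n with
  | zero =>
    intro u hu hcard j
    have hsupp : (DirectSum.decompose g u).support = ∅ := Finset.card_eq_zero.mp (le_antisymm hcard (Nat.zero_le _))
    have : DirectSum.decompose g u j = 0 := by
      rw [← DFinsupp.notMem_support_iff, hsupp]; exact Finset.notMem_empty j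
    rw [this]; simpa using U.zero_mem
  | succ n ih =>
    intro u hu hcard j
    by_cases hs : (DirectSum.decompose g u).support.Nonempty
    · obtain ⟨j0, hj0⟩ := hs
      set w := ⁅ζ, u⁆ - ((j0 : ℂ)) • u with hw
      have hwU : w ∈ U := Submodule.sub_mem _ (hU u hu) (Submodule.smul_mem _ _ hu)
      have hwj : ∀ i, (DirectSum.decompose g w i : L)
          = ((i : ℂ) - (j0 : ℂ)) • (DirectSum.decompose g u i : L) := by
        intro i
        have h1 : (DirectSum.decompose g w) = DirectSum.decompose g ⁅ζ, u⁆
            - ((j0 : ℂ)) • DirectSum.decompose g u := by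
          rw [hw, DirectSum.decompose_sub, DirectSum.decompose_smul]
        rw [h1, DirectSum.sub_apply, DFinsupp.smul_apply, AddSubgroupClass.coe_sub,
          SetLike.val_smul, decompose_lie_zeta hζ, sub_smul]
      have hsupp : (DirectSum.decompose g w).support ⊆
          (DirectSum.decompose g u).support.erase j0 := by
        intro i hi
        rw [DFinsupp.mem_support_iff] at hi
        rw [Finset.mem_erase, DFinsupp.mem_support_iff]
        constructor
        · rintro rfl
          exact hi (Subtype.ext (by rw [hwj i]; simp))
        · intro hzero
          exact hi (Subtype.ext (by rw [hwj i, hzero]; simp))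
      have hcard' : (DirectSum.decompose g w).support.card ≤ n := by
        have h1 := Finset.card_le_card hsupp
        have h2 := Finset.card_erase_of_mem hj0
        omega
      have key : ∀ i, i ≠ j0 → (DirectSum.decompose g u i : L) ∈ U := by
        intro i hij
        have hwi : (DirectSum.decompose g w i : L) ∈ U := ih w hwU hcard' i
        have hic : ((i : ℂ) - (j0 : ℂ)) ≠ 0 := by
          rw [sub_ne_zero]
          exact_mod_cast fun hc => hij (Int.cast_injective hc)
        have : (DirectSum.decompose g u i : L)
            = ((i : ℂ) - (j0 : ℂ))⁻¹ • (DirectSum.decompose g w i : L) := by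
          rw [hwj, smul_smul, inv_mul_cancel₀ hic, one_smul]
        rw [this]
        exact Submodule.smul_mem _ _ hwi
      by_cases hij : j = j0
      · subst hij
        have hrep : (DirectSum.decompose g u j : L)
            = u - ∑ i ∈ (DirectSum.decompose g u).support.erase j,
                (DirectSum.decompose g u i : L) := by
          have hsum := DirectSum.sum_support_decompose g u
          rw [← Finset.sum_erase_add _ _ hj0] at hsum
          exact eq_sub_of_add_eq' hsum
        rw [hrep]
        refine Submodule.sub_mem _ hu (Submodule.sum_mem _ fun i hi => ?_)
        exact key i (Finset.ne_of_mem_erase hi)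
      · exact key j hij
    · rw [Finset.not_nonempty_iff_eq_empty] at hs
      have : DirectSum.decompose g u j = 0 := by
        rw [← DFinsupp.notMem_support_iff, hs]; exact Finset.notMem_empty j
      rw [this]; simpa using U.zero_mem

end Aux


/-- In the JM-regular setting (`sl₂`-triple `(h,e,f)` with `h = 2ζ`,
`e ∈ 𝔤₁`, `f ∈ 𝔤₋₁`, `ζ` the grading element), the map `ad(e)^{m-1}` restricts to a linear
isomorphism from `𝔤_{1-m}` onto `V = 𝔤₀ ∩ W`, where `W` is the sum of the irreducible
`sl₂`-subrepresentations of dimension `2m-1`. -/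
theorem ad_pow_iso_onto_cayley_space
    (L : Type*) [LieRing L] [LieAlgebra ℂ L] [FiniteDimensional ℂ L]
    [LieAlgebra.IsSemisimple ℂ L]
    (m : ℕ) (hm : 0 < m)
    (g : ℤ → Submodule ℂ L)
    (hint : DirectSum.IsInternal g)
    (hbr : ∀ (j k : ℤ), ∀ x ∈ g j, ∀ y ∈ g k, ⁅x, y⁆ ∈ g (j + k))
    (hvan : ∀ j : ℤ, (m : ℤ) ≤ |j| → g j = ⊥)
    (ζ : L) (hζ0 : ζ ∈ g 0)
    (hζ : ∀ (j : ℤ), ∀ x ∈ g j, ⁅ζ, x⁆ = (j : ℂ) • x)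
    (h e f : L) (he : e ∈ g 1) (hf : f ∈ g (-1))
    (hhe : ⁅h, e⁆ = (2 : ℂ) • e) (hhf : ⁅h, f⁆ = (-2 : ℂ) • f) (hef : ⁅e, f⁆ = h)
    (hhζ : h = (2 : ℂ) • ζ) :
    Set.BijOn (⇑((LieAlgebra.ad ℂ L e) ^ (m - 1)))
      (g (1 - (m : ℤ)) : Set L)
      ((g 0 ⊓ sl2IrredSum h e f (2 * m - 1) : Submodule ℂ L) : Set L) := by
  classical
  letI : DirectSum.Decomposition g := hint.chooseDecomposition
  -- basic vanishing facts
  have habs : ∀ j : ℤ, (j < 1 - (m : ℤ) ∨ (m : ℤ) - 1 < j) → (m : ℤ) ≤ |j| := by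
    intro j hj
    rcases hj with hj | hj
    · exact le_abs.mpr (Or.inr (by omega))
    · exact le_abs.mpr (Or.inl (by omega))
  have hfz : ∀ z ∈ g (1 - (m : ℤ)), ⁅f, z⁆ = 0 := by
    intro z hz
    have hmem := hbr (-1) (1 - m) f hf z hz
    rw [hvan (-1 + (1 - m)) (habs _ (by omega))] at hmem
    simpa using hmem
  have hdesc : ∀ x ∈ g (1 - (m : ℤ)), ∀ k : ℕ, k ≤ 2 * m - 2 →
      ((ad ℂ L e) ^ k) x = 0 → x = 0 :=
    fun x hx => adE_pow_descent hbr hζ he hef hhζ hx (hfz x hx)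
  have hvanish : ∀ x ∈ g (1 - (m : ℤ)), ((ad ℂ L e) ^ (2 * m - 1)) x = 0 := by
    intro x hx
    have hmem := adE_pow_mem hbr he hx (2 * m - 1)
    rw [show (1 - (m : ℤ) + ((2 * m - 1 : ℕ) : ℤ)) = (m : ℤ) by omega] at hmem
    rw [hvan m (by simp)] at hmem
    simpa using hmem
  -- the irreducible generated by a nonzero lowest-weight vector in g (1-m)
  have hgen0 : ∀ x : L, ((ad ℂ L e) ^ (m - 1)) x ∈
      Set.range fun k : Fin (2 * m - 1) => ((ad ℂ L e) ^ (k : ℕ)) x :=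
    fun x => ⟨⟨m - 1, by omega⟩, rfl⟩
  have hirr : ∀ x ∈ g (1 - (m : ℤ)), x ≠ 0 → IsSl2Irreducible h e f (2 * m - 1)
      (Submodule.span ℂ (Set.range fun k : Fin (2 * m - 1) => ((ad ℂ L e) ^ (k : ℕ)) x)) := by
    intro x hx hx0
    refine ⟨ux_invariant hbr hζ he hef hhζ hx (hfz x hx) (hvanish x hx), ?_, ?_⟩
    · -- dimension
      have hli : LinearIndependent ℂ (fun k : Fin (2 * m - 1) => ((ad ℂ L e) ^ (k : ℕ)) x) := by
        apply iSupIndep.linearIndependent (fun k : Fin (2 * m - 1) => g (1 - (m : ℤ) + (k : ℕ)))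
        · have hinj : Function.Injective (fun k : Fin (2 * m - 1) => (1 - (m : ℤ) + (k : ℕ))) := by
            intro k l hkl
            simp only at hkl
            exact Fin.ext (by omega)
          exact hint.submodule_iSupIndep.comp hinj
        · intro k; exact adE_pow_mem hbr he hx k
        · intro k hzero
          exact hx0 (hdesc x hx k (by have := k.2; omega) hzero)
      rw [finrank_span_eq_card hli, Fintype.card_fin]
    · -- irreducibility
      intro U' hle hinv'
      by_cases hbot : U' = ⊥
      · exact Or.inl hbot
      right
      obtain ⟨u, huU', hu0⟩ := (Submodule.ne_bot_iff U').mp hbot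
      have hζinv : ∀ w ∈ U', ⁅ζ, w⁆ ∈ U' := by
        intro w hw
        have h2 : ⁅h, w⁆ ∈ U' := (hinv' w hw).1
        have heq : ⁅ζ, w⁆ = (2⁻¹ : ℂ) • ⁅h, w⁆ := by
          rw [hhζ, smul_lie, smul_smul]; norm_num
        rw [heq]; exact Submodule.smul_mem _ _ h2
      have hcomp := component_mem_of_invariant hζ U' hζinv
      have hne : ∃ j : ℤ, (DirectSum.decompose g u j : L) ≠ 0 := by
        by_contra hall
        push_neg at hall
        apply hu0
        calc u = ∑ i ∈ (DirectSum.decompose g u).support,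
            (DirectSum.decompose g u i : L) := (DirectSum.sum_support_decompose g u).symm
        _ = 0 := Finset.sum_eq_zero fun i _ => hall i
      obtain ⟨j, hj⟩ := hne
      set uj : L := (DirectSum.decompose g u j : L) with huj
      have hujU' : uj ∈ U' := hcomp u huU' j
      have hujg : uj ∈ g j := (DirectSum.decompose g u j).2
      have hujUx := hle hujU'
      rw [Submodule.mem_span_range_iff_exists_fun] at hujUx
      obtain ⟨a, ha⟩ := hujUx
      have hterm : uj = ∑ k : Fin (2 * m - 1), a k •
          (if (1 - (m : ℤ) + ((k : ℕ) : ℤ)) = j then ((ad ℂ L e) ^ (k : ℕ)) x else 0) := by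
        calc uj = (DirectSum.decompose g uj j : L) :=
              (DirectSum.decompose_of_mem_same g hujg).symm
        _ = (DirectSum.decompose g
              (∑ k : Fin (2 * m - 1), a k • ((ad ℂ L e) ^ (k : ℕ)) x) j : L) := by rw [ha]
        _ = ∑ k : Fin (2 * m - 1),
              a k • (DirectSum.decompose g (((ad ℂ L e) ^ (k : ℕ)) x) j : L) := by
            rw [DirectSum.decompose_sum, DFinsupp.finset_sum_apply,
              AddSubmonoidClass.coe_finset_sum]
            exact Finset.sum_congr rfl fun k _ => by
              rw [DirectSum.decompose_smul, DFinsupp.smul_apply]; rfl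
        _ = _ := by
            refine Finset.sum_congr rfl fun k _ => ?_
            by_cases hkj : (1 - (m : ℤ) + ((k : ℕ) : ℤ)) = j
            · rw [if_pos hkj]
              congr 1
              exact DirectSum.decompose_of_mem_same g (hkj ▸ adE_pow_mem hbr he hx (k : ℕ))
            · rw [if_neg hkj,
                DirectSum.decompose_of_mem_ne g (adE_pow_mem hbr he hx (k : ℕ)) hkj]
      have hex : ∃ k0 : Fin (2 * m - 1), (1 - (m : ℤ) + ((k0 : ℕ) : ℤ)) = j ∧ a k0 ≠ 0 := by
        by_contra hno
        push_neg at hno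
        apply hj
        rw [hterm]
        apply Finset.sum_eq_zero
        intro k _
        by_cases hkj : (1 - (m : ℤ) + ((k : ℕ) : ℤ)) = j
        · rw [if_pos hkj, hno k hkj, zero_smul]
        · rw [if_neg hkj, smul_zero]
      obtain ⟨k0, hk0j, ha0⟩ := hex
      have huniq : uj = a k0 • ((ad ℂ L e) ^ (k0 : ℕ)) x := by
        rw [hterm, Finset.sum_eq_single k0]
        · rw [if_pos hk0j]
        · intro k _ hkk0
          by_cases hkj : (1 - (m : ℤ) + ((k : ℕ) : ℤ)) = j
          · exact absurd (Fin.ext (by omega : (k : ℕ) = (k0 : ℕ))) hkk0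
          · rw [if_neg hkj, smul_zero]
        · intro hk0'; exact absurd (Finset.mem_univ k0) hk0'
      have hAk0 : ((ad ℂ L e) ^ (k0 : ℕ)) x ∈ U' := by
        have heq2 : ((ad ℂ L e) ^ (k0 : ℕ)) x = (a k0)⁻¹ • uj := by
          rw [huniq, smul_smul, inv_mul_cancel₀ ha0, one_smul]
        rw [heq2]; exact Submodule.smul_mem _ _ hujU'
      have hdown : ∀ k : ℕ, k ≤ 2 * m - 2 → ((ad ℂ L e) ^ k) x ∈ U' → x ∈ U' := by
        intro k
        induction k with
        | zero => intro _ hmem; simpa using hmem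
        | succ k ih =>
          intro hk hmem
          have hfm : ⁅f, ((ad ℂ L e) ^ (k + 1)) x⁆ ∈ U' := (hinv' _ hmem).2.2
          rw [lie_f_adE_pow hbr hζ he hef hhζ hx (hfz x hx) k] at hfm
          have hc : (-((k : ℂ) + 1) * (2 * ((1 - (m : ℤ) : ℤ) : ℂ) + (k : ℂ))) ≠ 0 := by
            have h1 : ((k : ℂ) + 1) ≠ 0 := by
              have : ((k + 1 : ℕ) : ℂ) ≠ 0 := Nat.cast_ne_zero.mpr (Nat.succ_ne_zero k)
              exact_mod_cast this
            have h2 : (2 * ((1 - (m : ℤ) : ℤ) : ℂ) + (k : ℂ)) ≠ 0 := by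
              have hcast : (2 * ((1 - (m : ℤ) : ℤ) : ℂ) + (k : ℂ))
                  = ((2 - 2 * m + k : ℤ) : ℂ) := by push_cast; ring
              rw [hcast, Ne, Int.cast_eq_zero]
              omega
            exact mul_ne_zero (neg_ne_zero.mpr h1) h2
          have := (U'.smul_mem_iff hc).mp hfm
          exact ih (by omega) this
      have hxU' : x ∈ U' := hdown (k0 : ℕ) (by have := k0.2; omega) hAk0
      exact le_antisymm hle (ux_le hinv' hxU' (2 * m - 1))
  -- classification of irreducibles: they lie in the union of images
  have hclass : ∀ U : Submodule ℂ L, IsSl2Irreducible h e f (2 * m - 1) U →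
      U ≤ ⨆ k : Fin (2 * m - 1), Submodule.map ((ad ℂ L e) ^ (k : ℕ)) (g (1 - (m : ℤ))) := by
    intro U hU
    obtain ⟨hUinv, hUrank, hUirr⟩ := hU
    have hUne : U ≠ ⊥ := by
      intro hbotU
      rw [hbotU, finrank_bot] at hUrank
      omega
    obtain ⟨u, huU, hu0⟩ := (Submodule.ne_bot_iff U).mp hUne
    have hζinv : ∀ w ∈ U, ⁅ζ, w⁆ ∈ U := by
      intro w hw
      have h2 : ⁅h, w⁆ ∈ U := (hUinv w hw).1
      have heq : ⁅ζ, w⁆ = (2⁻¹ : ℂ) • ⁅h, w⁆ := by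
        rw [hhζ, smul_lie, smul_smul]; norm_num
      rw [heq]; exact Submodule.smul_mem _ _ h2
    have hcomp := component_mem_of_invariant hζ U hζinv
    have hne : ∃ j1 : ℤ, (DirectSum.decompose g u j1 : L) ≠ 0 := by
      by_contra hall
      push_neg at hall
      apply hu0
      calc u = ∑ i ∈ (DirectSum.decompose g u).support,
          (DirectSum.decompose g u i : L) := (DirectSum.sum_support_decompose g u).symm
      _ = 0 := Finset.sum_eq_zero fun i _ => hall i
    obtain ⟨j1, hj1⟩ := hne
    set S : Finset ℤ := (Finset.Icc (1 - (m : ℤ)) ((m : ℤ) - 1)).filter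
        (fun j => ∃ w ∈ U, w ∈ g j ∧ w ≠ 0) with hS
    have hmemS : ∀ j : ℤ, (∃ w ∈ U, w ∈ g j ∧ w ≠ 0) → j ∈ S := by
      rintro j ⟨w, hwU, hwg, hw0⟩
      rw [hS, Finset.mem_filter, Finset.mem_Icc]
      refine ⟨?_, w, hwU, hwg, hw0⟩
      by_contra hout
      rw [not_and_or, not_le, not_le] at hout
      have hb : g j = ⊥ := hvan j (habs j (by omega))
      rw [hb] at hwg
      exact hw0 ((Submodule.mem_bot ℂ).mp hwg)
    have hSne : S.Nonempty :=
      ⟨j1, hmemS j1 ⟨_, hcomp u huU j1, (DirectSum.decompose g u j1).2, hj1⟩⟩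
    set j := S.min' hSne with hjdef
    have hjS : j ∈ S := S.min'_mem hSne
    rw [hS, Finset.mem_filter, Finset.mem_Icc] at hjS
    obtain ⟨⟨hjlo, hjhi⟩, v0, hv0U, hv0g, hv00⟩ := hjS
    have hfv : ⁅f, v0⁆ = 0 := by
      by_contra hfv0
      have hfU : ⁅f, v0⁆ ∈ U := (hUinv v0 hv0U).2.2
      have hfg : ⁅f, v0⁆ ∈ g (j - 1) := by
        have hb := hbr (-1) j f hf v0 hv0g
        rwa [show (-1 + j) = j - 1 by ring] at hb
      have hj1S : j - 1 ∈ S := hmemS _ ⟨_, hfU, hfg, hfv0⟩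
      have := S.min'_le _ hj1S
      omega
    by_cases hjeq : j = 1 - (m : ℤ)
    · rw [hjeq] at hv0g
      have hUeq : U = Submodule.span ℂ
          (Set.range fun k : Fin (2 * m - 1) => ((ad ℂ L e) ^ (k : ℕ)) v0) := by
        have hinv2 := ux_invariant hbr hζ he hef hhζ hv0g (hfz v0 hv0g) (hvanish v0 hv0g)
        have hsub := ux_le hUinv hv0U (2 * m - 1)
        rcases hUirr _ hsub hinv2 with hb | he2
        · exfalso
          apply hv00
          have hv0b : v0 ∈ (⊥ : Submodule ℂ L) := by
            rw [← hb]; exact Submodule.subset_span ⟨⟨0, by omega⟩, by simp⟩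
          simpa using hv0b
        · exact he2.symm
      rw [hUeq, Submodule.span_le]
      rintro _ ⟨k, rfl⟩
      have hmm : ((ad ℂ L e) ^ (k : ℕ)) v0
          ∈ Submodule.map ((ad ℂ L e) ^ (k : ℕ)) (g (1 - (m : ℤ))) := ⟨v0, hv0g, rfl⟩
      exact (le_iSup (fun k : Fin (2 * m - 1) =>
        Submodule.map ((ad ℂ L e) ^ (k : ℕ)) (g (1 - (m : ℤ)))) k) hmm
    · exfalso
      have hjgt : 1 - (m : ℤ) < j := lt_of_le_of_ne hjlo (Ne.symm hjeq)
      set K0 : ℕ := ((m : ℤ) - j).toNat with hK0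
      have hK0pos : 0 < K0 := by omega
      have hvan0 : ((ad ℂ L e) ^ K0) v0 = 0 := by
        have hmem := adE_pow_mem hbr he hv0g K0
        rw [show (j + (K0 : ℤ)) = (m : ℤ) by omega] at hmem
        rw [hvan m (by simp)] at hmem
        simpa using hmem
      have hinv2 := ux_invariant hbr hζ he hef hhζ hv0g hfv hvan0
      have hsub := ux_le hUinv hv0U K0
      rcases hUirr _ hsub hinv2 with hb | he2
      · apply hv00
        have hv0b : v0 ∈ (⊥ : Submodule ℂ L) := by
          rw [← hb]; exact Submodule.subset_span ⟨⟨0, hK0pos⟩, by simp⟩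
        simpa using hv0b
      · have hle2 : Module.finrank ℂ (Submodule.span ℂ
            (Set.range fun k : Fin K0 => ((ad ℂ L e) ^ (k : ℕ)) v0)) ≤ K0 := by
          simpa [Set.finrank] using
            finrank_range_le_card (fun k : Fin K0 => ((ad ℂ L e) ^ (k : ℕ)) v0)
        rw [he2, hUrank] at hle2
        omega
  -- final assembly
  constructor
  · -- maps to
    intro x hx
    have h0 : ((ad ℂ L e) ^ (m - 1)) x ∈ g 0 := by
      have hmem := adE_pow_mem hbr he hx (m - 1)
      rwa [show (1 - (m : ℤ) + ((m - 1 : ℕ) : ℤ)) = 0 by omega] at hmem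
    have hW : ((ad ℂ L e) ^ (m - 1)) x ∈ sl2IrredSum h e f (2 * m - 1) := by
      by_cases hx0 : x = 0
      · subst hx0; rw [map_zero]; exact Submodule.zero_mem _
      · have hle : Submodule.span ℂ
            (Set.range fun k : Fin (2 * m - 1) => ((ad ℂ L e) ^ (k : ℕ)) x)
            ≤ sl2IrredSum h e f (2 * m - 1) :=
          le_iSup₂ (f := fun (U : Submodule ℂ L)
            (_ : U ∈ {U : Submodule ℂ L | IsSl2Irreducible h e f (2 * m - 1) U}) => U)
            _ (hirr x hx hx0)
        exact hle (Submodule.subset_span (hgen0 x))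
    exact Submodule.mem_inf.mpr ⟨h0, hW⟩
  constructor
  · -- injectivity
    intro x hx y hy hxy
    have hsub : ((ad ℂ L e) ^ (m - 1)) (x - y) = 0 := by rw [map_sub, hxy, sub_self]
    have := hdesc (x - y) (Submodule.sub_mem _ hx hy) (m - 1) (by omega) hsub
    exact sub_eq_zero.mp this
  · -- surjectivity
    intro v hv
    rw [SetLike.mem_coe, Submodule.mem_inf] at hv
    obtain ⟨hv0, hvW⟩ := hv
    set W' : Submodule ℂ L :=
      ⨆ k : Fin (2 * m - 1), Submodule.map ((ad ℂ L e) ^ (k : ℕ)) (g (1 - (m : ℤ))) with hW'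
    have hvW' : v ∈ W' := by
      have : sl2IrredSum h e f (2 * m - 1) ≤ W' := by
        rw [sl2IrredSum]
        exact iSup₂_le fun U hU => hclass U hU
      exact this hvW
    -- projection onto g 0
    set π : L →ₗ[ℂ] L :=
      { toFun := fun y => (DirectSum.decompose g y 0 : L)
        map_add' := fun a b => by
          show (DirectSum.decompose g (a + b) 0 : L)
            = (DirectSum.decompose g a 0 : L) + (DirectSum.decompose g b 0 : L)
          rw [DirectSum.decompose_add, DirectSum.add_apply]; rfl
        map_smul' := fun c a => by
          show (DirectSum.decompose g (c • a) 0 : L) = c • (DirectSum.decompose g a 0 : L)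
          rw [DirectSum.decompose_smul, DFinsupp.smul_apply]; rfl } with hπ
    have hπv : π v = v := DirectSum.decompose_of_mem_same g hv0
    have hmap : Submodule.map π W' ≤ Submodule.map ((ad ℂ L e) ^ (m - 1)) (g (1 - (m : ℤ))) := by
      rw [hW', Submodule.map_iSup]
      apply iSup_le
      intro k
      intro z hz
      rw [Submodule.mem_map] at hz
      obtain ⟨w, hw, rfl⟩ := hz
      rw [Submodule.mem_map] at hw
      obtain ⟨y, hy, rfl⟩ := hw
      by_cases hk : (k : ℕ) = m - 1
      · have hsame : π (((ad ℂ L e) ^ (k : ℕ)) y) = ((ad ℂ L e) ^ (k : ℕ)) y := by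
          apply DirectSum.decompose_of_mem_same
          have hmm := adE_pow_mem hbr he hy (k : ℕ)
          rwa [show (1 - (m : ℤ) + ((k : ℕ) : ℤ)) = 0 by omega] at hmm
        rw [hsame, hk]
        exact ⟨y, hy, rfl⟩
      · have hzero : π (((ad ℂ L e) ^ (k : ℕ)) y) = 0 := by
          apply DirectSum.decompose_of_mem_ne g (adE_pow_mem hbr he hy (k : ℕ))
          omega
        rw [hzero]
        exact Submodule.zero_mem _
    have hvmem : v ∈ Submodule.map ((ad ℂ L e) ^ (m - 1)) (g (1 - (m : ℤ))) :=
      hmap ⟨v, hvW', hπv⟩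
    obtain ⟨x, hx, hxe⟩ := hvmem
    exact ⟨x, hx, hxe⟩
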